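/- The unique solution α₂ of the equation tan(πα) = (2/π) · α / (α² − 1/4) in the interval (2, 5/2) satisfies 2.09 < α₂ < 2.11. -/
import Mathlib

open Real Set

private noncomputable def crackF (α : ℝ) : ℝ :=
  Real.tan (Real.pi * α) - (2 / Real.pi) * (α / (α ^ 2 - 1/4))

private lemma crack_tan_shift (α : ℝ) :
    Real.tan (Real.pi * α) = Real.tan (Real.pi * (α - 2)) := by
  have h := Real.tan_periodic.sub_nat_mul_eq (x := Real.pi * α) 2
  rw [← h]
  norm_num
  ring_nf

private lemma crack_mono : StrictMonoOn crackF (Set.Ioo (2:ℝ) (5/2)) := by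
  have hπ := Real.pi_pos
  intro a ha b hb hab
  have h1 : Real.tan (Real.pi * a) < Real.tan (Real.pi * b) := by
    rw [crack_tan_shift a, crack_tan_shift b]
    have ha' : Real.pi * (a - 2) ∈ Set.Ioo (-(Real.pi/2)) (Real.pi/2) := by
      constructor <;> nlinarith [ha.1, ha.2]
    have hb' : Real.pi * (b - 2) ∈ Set.Ioo (-(Real.pi/2)) (Real.pi/2) := by
      constructor <;> nlinarith [hb.1, hb.2]
    exact Real.strictMonoOn_tan ha' hb' (by nlinarith)
  have h2 : (2 / Real.pi) * (b / (b ^ 2 - 1/4)) < (2 / Real.pi) * (a / (a ^ 2 - 1/4)) := by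
    have h2π : (0:ℝ) < 2 / Real.pi := by positivity
    apply mul_lt_mul_of_pos_left _ h2π
    rw [div_lt_div_iff₀ (by nlinarith [ha.1, hab]) (by nlinarith [ha.1])]
    nlinarith [ha.1, hab, mul_pos (sub_pos.2 hab) (mul_pos (by linarith [ha.1] : (0:ℝ) < a) (by linarith [ha.1, hab] : (0:ℝ) < b))]
  unfold crackF
  linarith

private lemma crack_F209 : crackF 2.09 < 0 := by
  have hπ := Real.pi_pos
  have hπl := Real.pi_gt_d6
  have hπu := Real.pi_lt_d6
  have h1 : Real.tan (Real.pi * 2.09) = Real.tan (Real.pi * 0.09) := by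
    rw [crack_tan_shift]; norm_num
  have hx0 : (0:ℝ) < Real.pi * 0.09 := by positivity
  have hxu : Real.pi * 0.09 < 0.2827434 := by nlinarith
  have hsin : Real.sin (Real.pi * 0.09) < 0.2827434 :=
    lt_trans (Real.sin_lt hx0) hxu
  have hcos : (0.96:ℝ) < Real.cos (Real.pi * 0.09) := by
    have h := Real.one_sub_sq_div_two_lt_cos (x := Real.pi * 0.09) (ne_of_gt hx0)
    nlinarith
  have htan : Real.tan (Real.pi * 0.09) < 0.2946 := by
    rw [Real.tan_eq_sin_div_cos, div_lt_iff₀ (by linarith)]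
    nlinarith
  have h2pi : (0.6366:ℝ) < 2 / Real.pi := by
    rw [lt_div_iff₀ hπ]; nlinarith
  have hG : (0.2946:ℝ) < (2 / Real.pi) * ((2.09:ℝ) / ((2.09:ℝ) ^ 2 - 1/4)) := by
    have hc : ((2.09:ℝ) / ((2.09:ℝ) ^ 2 - 1/4)) = 2.09 / 4.1181 := by norm_num
    rw [hc]
    nlinarith
  unfold crackF
  rw [h1]
  linarith

private lemma crack_F211 : 0 < crackF 2.11 := by
  have hπ := Real.pi_pos
  have hπl := Real.pi_gt_d6
  have hπu := Real.pi_lt_d6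
  have h1 : Real.tan (Real.pi * 2.11) = Real.tan (Real.pi * 0.11) := by
    rw [crack_tan_shift]; norm_num
  have hx0 : (0:ℝ) < Real.pi * 0.11 := by positivity
  have hxh : Real.pi * 0.11 < Real.pi / 2 := by nlinarith
  have htan : (0.345575:ℝ) < Real.tan (Real.pi * 0.11) := by
    have h := Real.lt_tan hx0 hxh
    nlinarith
  have h2pi : (2:ℝ) / Real.pi < 0.63662 := by
    rw [div_lt_iff₀ hπ]; nlinarith
  have hG : (2 / Real.pi) * ((2.11:ℝ) / ((2.11:ℝ) ^ 2 - 1/4)) < 0.345575 := by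
    have hc : ((2.11:ℝ) / ((2.11:ℝ) ^ 2 - 1/4)) = 2.11 / 4.2021 := by norm_num
    rw [hc]
    have h2π : (0:ℝ) < 2 / Real.pi := by positivity
    nlinarith
  unfold crackF
  rw [h1]
  linarith

private lemma crack_cont : ContinuousOn crackF (Set.Icc (2.09:ℝ) 2.11) := by
  apply ContinuousOn.sub
  · intro a ha
    apply ContinuousAt.continuousWithinAt
    have hc : Real.cos (Real.pi * a) ≠ 0 := by
      have h1 : Real.cos (Real.pi * a) = Real.cos (Real.pi * a - 2 * Real.pi) := by
        rw [Real.cos_sub_two_pi]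
      have h2 : Real.pi * a - 2 * Real.pi = Real.pi * (a - 2) := by ring
      rw [h1, h2]
      have hπ := Real.pi_pos
      apply ne_of_gt
      apply Real.cos_pos_of_mem_Ioo
      constructor <;> nlinarith [ha.1, ha.2]
    exact (Real.continuousAt_tan.2 hc).comp (by fun_prop)
  · apply ContinuousOn.mul continuousOn_const
    apply ContinuousOn.div continuousOn_id (by fun_prop)
    intro a ha
    nlinarith [ha.1, ha.2]

/-- The unique solution `α₂` of `tan(πα) = (2/π) · α / (α² − 1/4)` in `(2, 5/2)` satisfies
`2.09 < α₂ < 2.11`. -/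
theorem crack_exponent_two_bounds :
    (∃! α : ℝ, α ∈ Set.Ioo (2 : ℝ) (5/2) ∧
      Real.tan (Real.pi * α) = (2 / Real.pi) * (α / (α ^ 2 - 1/4))) ∧
    ∀ α : ℝ, α ∈ Set.Ioo (2 : ℝ) (5/2) →
      Real.tan (Real.pi * α) = (2 / Real.pi) * (α / (α ^ 2 - 1/4)) →
      2.09 < α ∧ α < 2.11 := by
  have hroot_iff : ∀ α : ℝ,
      (Real.tan (Real.pi * α) = (2 / Real.pi) * (α / (α ^ 2 - 1/4))) ↔ crackF α = 0 := by
    intro α; unfold crackF; constructor <;> intro h <;> linarith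
  have hmem209 : (2.09:ℝ) ∈ Set.Ioo (2:ℝ) (5/2) := by constructor <;> norm_num
  have hmem211 : (2.11:ℝ) ∈ Set.Ioo (2:ℝ) (5/2) := by constructor <;> norm_num
  -- bounds for any root
  have hbounds : ∀ α : ℝ, α ∈ Set.Ioo (2 : ℝ) (5/2) → crackF α = 0 → 2.09 < α ∧ α < 2.11 := by
    intro α hα hF
    constructor
    · by_contra h
      push_neg at h
      rcases lt_or_eq_of_le h with h' | h'
      · have := crack_mono hα hmem209 h'
        have := crack_F209
        linarith
      · have := crack_F209
        rw [h'] at hF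
        linarith
    · by_contra h
      push_neg at h
      rcases lt_or_eq_of_le h with h' | h'
      · have := crack_mono hmem211 hα h'
        have := crack_F211
        linarith
      · have := crack_F211
        rw [← h'] at hF
        linarith
  -- existence via IVT
  have hIVT := intermediate_value_Icc (by norm_num : (2.09:ℝ) ≤ 2.11) crack_cont
  have h0mem : (0:ℝ) ∈ Set.Icc (crackF 2.09) (crackF 2.11) :=
    ⟨le_of_lt crack_F209, le_of_lt crack_F211⟩
  obtain ⟨c, hc, hFc⟩ := hIVT h0mem
  have hcmem : c ∈ Set.Ioo (2:ℝ) (5/2) := by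
    constructor
    · linarith [hc.1]
    · have := hc.2; norm_num at this ⊢; linarith
  constructor
  · refine ⟨c, ⟨hcmem, (hroot_iff c).2 hFc⟩, ?_⟩
    rintro β ⟨hβmem, hβeq⟩
    exact crack_mono.injOn hβmem hcmem (by rw [(hroot_iff β).1 hβeq, hFc])
  · intro α hα heq
    exact hbounds α hα ((hroot_iff α).1 heq)
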